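/- arXiv:2605.18924 — 7 statements merged into one kernel-verified Lean document; each statement's English description precedes it below -/
import Mathlib

section
/- If C satisfies evaluation completeness Eval(C), then for every transformer g : Form → Form there exists a formula B such that B ≃_C g(B), i.e., C(B → g(B)) and C(g(B) → B). -/
inductive Form : Type
  | Bot : Form
  | Imp : Form → Form → Form

def FNeg (A : Form) : Form := Form.Imp A Form.Bot

def Eqv (C : Form → Prop) (A B : Form) : Prop :=
  C (Form.Imp A B) ∧ C (Form.Imp B A)

def MP (C : Form → Prop) : Prop :=
  ∀ A B, C (Form.Imp A B) → C A → C B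

def Cons (C : Form → Prop) : Prop := ¬ C Form.Bot

def LEM (C : Form → Prop) : Prop := ∀ A, C A ∨ C (FNeg A)

def EvalC {Code : Type} (eval : Code → Code → Form) (C : Form → Prop) : Prop :=
  ∀ f : Code → Form, ∃ c : Code, ∀ x : Code, Eqv C (eval c x) (f x)

def Dec (C : Form → Prop) : Prop :=
  ∃ d : Form → Bool, (∀ A, d A = true → C A) ∧ (∀ A, d A = false → C (FNeg A))

theorem generic_fixed_point {Code : Type} (eval : Code → Code → Form)
    (C : Form → Prop) (hEv : EvalC eval C) (g : Form → Form) :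
    ∃ B : Form, Eqv C B (g B) := by
  obtain ⟨c, hc⟩ := hEv (fun x => g (eval x x))
  exact ⟨eval c c, hc c⟩
end

section
/- If C satisfies evaluation completeness Eval(C), then there exists a formula B that is a negation fixed-point for C, i.e., B ≃_C ¬B, meaning C(B → (B → ⊥)) and C((B → ⊥) → B). -/
theorem negation_fixed_point {Code : Type} (eval : Code → Code → Form)
    (C : Form → Prop) (hEv : EvalC eval C) :
    ∃ B : Form, Eqv C B (FNeg B) := by
  obtain ⟨c, hc⟩ := hEv (fun x => FNeg (eval x x))
  exact ⟨eval c c, hc c⟩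
end

section
/- Assume Eval(C), MP(C), and LEM(C). Then there exists a formula B such that B ≃_C ¬B, and (C(B) ∨ C(¬B)), and C(⊥). -/
theorem diagonal_collapse {Code : Type} (eval : Code → Code → Form)
    (C : Form → Prop) (hEv : EvalC eval C) (hMP : MP C) (hLEM : LEM C) :
    ∃ B : Form, Eqv C B (FNeg B) ∧ (C B ∨ C (FNeg B)) ∧ C Form.Bot := by
  obtain ⟨c, hc⟩ := hEv (fun x => FNeg (eval x x))
  obtain ⟨h1, h2⟩ := hc c
  refine ⟨eval c c, ⟨h1, h2⟩, hLEM _, ?_⟩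
  rcases hLEM (eval c c) with h | h
  · exact hMP _ _ (hMP _ _ h1 h) h
  · exact hMP _ _ h (hMP _ _ h2 h)
end

section
/- The four conditions Eval(C), MP(C), Cons(C), and LEM(C) are jointly inconsistent: their conjunction implies False. -/
theorem aporetic_obstruction {Code : Type} (eval : Code → Code → Form)
    (C : Form → Prop) (hEv : EvalC eval C) (hMP : MP C) (hCons : Cons C)
    (hLEM : LEM C) : False := by
  obtain ⟨c, hc⟩ := hEv (fun x => FNeg (eval x x))
  obtain ⟨h1, h2⟩ := hc c
  set A := eval c c with hA
  rcases hLEM A with h | h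
  · exact hCons (hMP A Form.Bot (hMP A (FNeg A) h1 h) h)
  · have hA' : C A := hMP (FNeg A) A h2 h
    exact hCons (hMP A Form.Bot h hA')
end

section
/- Assume Eval(C), MP(C), and Dec(C). Then there exists a formula B with B ≃_C ¬B, (C(B) ∨ C(¬B)), and C(⊥). In particular no consistency hypothesis is needed to derive C(⊥). -/
theorem decision_collapse {Code : Type} (eval : Code → Code → Form)
    (C : Form → Prop) (hEv : EvalC eval C) (hMP : MP C) (hDec : Dec C) :
    ∃ B : Form, Eqv C B (FNeg B) ∧ (C B ∨ C (FNeg B)) ∧ C Form.Bot := by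
  obtain ⟨c, hc⟩ := hEv (fun x => FNeg (eval x x))
  set B := eval c c with hB
  have heq : Eqv C B (FNeg B) := hc c
  obtain ⟨d, hdt, hdf⟩ := hDec
  have hboth : C B ∧ C (FNeg B) := by
    cases h : d B with
    | true =>
      have hb := hdt B h
      exact ⟨hb, hMP _ _ heq.1 hb⟩
    | false =>
      have hnb := hdf B h
      exact ⟨hMP _ _ heq.2 hnb, hnb⟩
  exact ⟨B, heq, Or.inl hboth.1, hMP _ _ hboth.2 hboth.1⟩
end

section
/- Assume Eval(C) and Cons(C) and MP(C). Then there exists a formula B such that neither C(B) nor C(¬B) holds: the consistent regulator must withhold both disjuncts at the diagonal formula. -/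
theorem withhold_both {Code : Type} (eval : Code → Code → Form)
    (C : Form → Prop) (hEv : EvalC eval C) (hCons : Cons C) (hMP : MP C) :
    ∃ B : Form, ¬ C B ∧ ¬ C (FNeg B) := by
  obtain ⟨c, hc⟩ := hEv (fun x => FNeg (eval x x))
  obtain ⟨h1, h2⟩ := hc c
  refine ⟨eval c c, ?_, ?_⟩
  · intro hB
    exact hCons (hMP _ _ (hMP _ _ h1 hB) hB)
  · intro hN
    exact hCons (hMP _ _ hN (hMP _ _ h2 hN))
end

section
/- If Eval(C), MP(C), and Cons(C) hold, then Dec(C) fails: there is no d : Form → Bool such that for all A, d A = true → C(A) and d A = false → C(¬A). -/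
theorem no_decision {Code : Type} (eval : Code → Code → Form)
    (C : Form → Prop) (hEv : EvalC eval C) (hMP : MP C) (hCons : Cons C) :
    ¬ ∃ d : Form → Bool,
      (∀ A, d A = true → C A) ∧ (∀ A, d A = false → C (FNeg A)) := by
  rintro ⟨d, hT, hF⟩
  obtain ⟨c, hc⟩ := hEv (fun x => FNeg (eval x x))
  obtain ⟨h1, h2⟩ := hc c
  set A := eval c c with hA
  cases hd : d A with
  | true =>
    have hCA := hT A hd
    have hNA : C (FNeg A) := hMP _ _ h1 hCA
    exact hCons (hMP _ _ hNA hCA)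
  | false =>
    have hNA := hF A hd
    have hCA : C A := hMP _ _ h2 hNA
    exact hCons (hMP _ _ hNA hCA)
end
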